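/- Corollary for Lipschitz components: let (H,d) be a locally compact Hadamard space and f₁,…,f_N : H → ℝ convex functions that are Lipschitz on H with a common constant L > 0, and suppose f = Σₙ fₙ attains its minimum. Let (λ_k)_{k∈ℕ₀} be positive reals with Σ_k λ_k = ∞ and Σ_k λ_k² < ∞, let x₀ ∈ H, and for each k ∈ ℕ₀ and n = 1,…,N let x_{kN+n} be the minimizer of z ↦ fₙ(z) + (1/(2λ_k))·d(x_{kN+n−1},z)². Then the sequence (x_j)_{j∈ℕ₀} converges to a minimizer of f. -/

import Mathlib

open Filter Topology

/-- A Hadamard space structure on a metric space `H`: a geodesic combination map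
`geo x y t = (1-t)x ⊕ ty` satisfying the geodesic axioms and the CAT(0) inequality.
(Completeness is imposed via the `CompleteSpace` instance in the theorems.) -/
structure Hadamard (H : Type*) [MetricSpace H] : Type _ where
  geo : H → H → ℝ → H
  geo_zero : ∀ x y : H, geo x y 0 = x
  geo_one : ∀ x y : H, geo x y 1 = y
  geo_dist : ∀ x y : H, ∀ s ∈ Set.Icc (0 : ℝ) 1, ∀ t ∈ Set.Icc (0 : ℝ) 1,
    dist (geo x y s) (geo x y t) = |s - t| * dist x y
  cat0 : ∀ z x y : H, ∀ t ∈ Set.Icc (0 : ℝ) 1,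
    dist z (geo x y t) ^ 2
      ≤ (1 - t) * dist z x ^ 2 + t * dist z y ^ 2 - t * (1 - t) * dist x y ^ 2

/-- A function `f : H → (-∞,∞]` is (geodesically) convex if along every geodesic
`t ↦ (1-t)x ⊕ ty` it satisfies the convexity inequality. -/
def GeoConvex {H : Type*} [MetricSpace H] (G : Hadamard H) (f : H → EReal) : Prop :=
  ∀ x y : H, ∀ t ∈ Set.Icc (0 : ℝ) 1,
    f (G.geo x y t) ≤ ((1 - t : ℝ) : EReal) * f x + ((t : ℝ) : EReal) * f y

/-- A real-valued function `f : H → ℝ` is (geodesically) convex if along every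
geodesic `t ↦ (1-t)x ⊕ ty` it satisfies the convexity inequality. -/
def GeoConvexReal {H : Type*} [MetricSpace H] (G : Hadamard H) (f : H → ℝ) : Prop :=
  ∀ x y : H, ∀ t ∈ Set.Icc (0 : ℝ) 1,
    f (G.geo x y t) ≤ (1 - t) * f x + t * f y

open Metric
open scoped NNReal

/-!
A proximal step `p` of a convex `f` from `w` satisfies the variational inequality
`2η (f p - f z) + d(w,p)² + d(p,z)² ≤ d(w,z)²`: compare `p` with the points of the geodesic from
`p` to `z` and let them tend to `p`, using the CAT(0) inequality. Lipschitz continuity keeps each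
step within `2ηL`, so summing over one cycle gives, for the anchors `aₖ = x_{kN}` and every `z`,
`d(aₖ₊₁,z)² + 2λₖ (f aₖ - f z) ≤ d(aₖ,z)² + C λₖ²`.
For a minimizer `z` this bounds the anchors and gives `∑ λₖ (f aₖ - min f) < ∞`; as `∑ λₖ = ∞`,
some subsequence has `f aₖ → min f`. Closed balls of a locally compact Hadamard space are compact
(Hopf–Rinow), so a further subsequence converges to a minimizer `z`, and the quasi-Fejér
inequality with respect to `z` forces the whole anchor sequence to converge to `z`. The
intermediate iterates follow because `λₖ → 0`.
-/

theorem totallyBounded_of_forall_subset_cthickening {X : Type*} [PseudoMetricSpace X]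
    {s : Set X} (h : ∀ ε > 0, ∃ K, IsCompact K ∧ s ⊆ cthickening ε K) : TotallyBounded s := by
  refine totallyBounded_iff.2 fun ε hε => ?_
  obtain ⟨K, hK, hsK⟩ := h (ε / 2) (half_pos hε)
  obtain ⟨t, -, ht, hKt⟩ := finite_cover_balls_of_compact hK (half_pos hε)
  refine ⟨t, ht, fun w hw => ?_⟩
  rw [hK.cthickening_eq_biUnion_closedBall (half_pos hε).le] at hsK
  obtain ⟨u, hu, hwu⟩ := Set.mem_iUnion₂.1 (hsK hw)
  obtain ⟨y, hy, huy⟩ := Set.mem_iUnion₂.1 (hKt hu)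
  refine Set.mem_iUnion₂.2 ⟨y, hy, mem_ball.2 ?_⟩
  linarith [dist_triangle w u y, mem_closedBall.1 hwu, mem_ball.1 huy]

namespace Hadamard

variable {H : Type*} [MetricSpace H]

theorem dist_geo_left (G : Hadamard H) (x y : H) {t : ℝ} (ht : t ∈ Set.Icc (0 : ℝ) 1) :
    dist x (G.geo x y t) = t * dist x y := by
  simpa [G.geo_zero, abs_of_nonneg ht.1] using G.geo_dist x y 0 ⟨le_rfl, zero_le_one⟩ t ht

theorem dist_geo_right (G : Hadamard H) (x y : H) {t : ℝ} (ht : t ∈ Set.Icc (0 : ℝ) 1) :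
    dist (G.geo x y t) y = (1 - t) * dist x y := by
  simpa [G.geo_one, abs_of_nonpos (sub_nonpos.2 ht.2)] using
    G.geo_dist x y t ht 1 ⟨zero_le_one, le_rfl⟩

theorem closedBall_subset_cthickening_closedBall (G : Hadamard H) (x₀ : H) {r s : ℝ}
    (hs : 0 ≤ s) (hsr : s ≤ r) :
    closedBall x₀ r ⊆ cthickening (r - s) (closedBall x₀ s) := by
  intro w hw
  rw [mem_closedBall'] at hw
  rcases le_or_gt (dist x₀ w) s with hws | hws
  · exact mem_cthickening_of_dist_le w w _ _ (mem_closedBall'.2 hws) (by simpa using hsr)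
  have hpos : 0 < dist x₀ w := hs.trans_lt hws
  have ht : s / dist x₀ w ∈ Set.Icc (0 : ℝ) 1 := ⟨by positivity, (div_le_one hpos).2 hws.le⟩
  refine mem_cthickening_of_dist_le w (G.geo x₀ w (s / dist x₀ w)) _ _ ?_ ?_
  · rw [mem_closedBall', G.dist_geo_left _ _ ht, div_mul_cancel₀ _ hpos.ne']
  · rw [dist_comm, G.dist_geo_right _ _ ht, sub_mul, one_mul, div_mul_cancel₀ _ hpos.ne']
    linarith

theorem exists_isCompact_closedBall_add [LocallyCompactSpace H] (G : Hadamard H) {x₀ : H}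
    {r : ℝ} (hr : 0 ≤ r) (hK : IsCompact (closedBall x₀ r)) :
    ∃ δ > 0, IsCompact (closedBall x₀ (r + δ)) := by
  obtain ⟨δ, hδ, hδK⟩ := hK.exists_isCompact_cthickening
  refine ⟨δ, hδ, hδK.of_isClosed_subset isClosed_closedBall ?_⟩
  simpa using G.closedBall_subset_cthickening_closedBall x₀ hr (le_add_of_nonneg_right hδ.le)

theorem isCompact_closedBall_of_forall_lt [CompleteSpace H] (G : Hadamard H) {x₀ : H} {R : ℝ}
    (hR : 0 < R) (h : ∀ s < R, IsCompact (closedBall x₀ s)) : IsCompact (closedBall x₀ R) := by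
  refine (totallyBounded_of_forall_subset_cthickening fun ε hε => ?_).isCompact_of_isClosed
    isClosed_closedBall
  set s := max (R - ε) 0
  refine ⟨closedBall x₀ s, h s (max_lt (by linarith) hR), ?_⟩
  exact (G.closedBall_subset_cthickening_closedBall x₀ (le_max_right _ _)
    (max_le (by linarith) hR.le)).trans (cthickening_mono (sub_le_comm.2 (le_max_left _ _)) _)

theorem properSpace [CompleteSpace H] [LocallyCompactSpace H] (G : Hadamard H) : ProperSpace H := by
  refine ⟨fun x₀ r => ?_⟩
  -- The infimum of the radii of noncompact balls would be a compact radius that can be enlarged.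
  by_contra hr
  set T := {s : ℝ | ¬IsCompact (closedBall x₀ s)}
  have hT : ∀ s ∈ T, 0 ≤ s := fun s hs => not_lt.1 fun hneg =>
    hs (by rw [closedBall_eq_empty.2 hneg]; exact isCompact_empty)
  have hne : T.Nonempty := ⟨r, hr⟩
  have hR : 0 ≤ sInf T := le_csInf hne hT
  have hbelow : ∀ s < sInf T, IsCompact (closedBall x₀ s) := fun s hs =>
    by_contra fun h => (csInf_le ⟨0, hT⟩ h).not_gt hs
  have hRc : IsCompact (closedBall x₀ (sInf T)) := by
    rcases hR.eq_or_lt with h0 | hpos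
    · rw [← h0, closedBall_zero]; exact isCompact_singleton
    · exact G.isCompact_closedBall_of_forall_lt hpos hbelow
  obtain ⟨δ, hδ, hδc⟩ := G.exists_isCompact_closedBall_add hR hRc
  obtain ⟨s, hsT, hs⟩ := exists_lt_of_csInf_lt hne (lt_add_of_pos_right _ hδ)
  exact hsT (hδc.of_isClosed_subset isClosed_closedBall (closedBall_subset_closedBall hs.le))

end Hadamard

def IsProxPoint {X : Type*} [PseudoMetricSpace X] (f : X → ℝ) (η : ℝ) (w p : X) : Prop :=
  ∀ z, f p + 1 / (2 * η) * dist w p ^ 2 ≤ f z + 1 / (2 * η) * dist w z ^ 2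

namespace IsProxPoint

theorem dist_le {X : Type*} [PseudoMetricSpace X] {f : X → ℝ} {η : ℝ} {w p : X}
    (hp : IsProxPoint f η w p) (hη : 0 < η) {K : ℝ≥0} (hf : LipschitzWith K f) :
    dist w p ≤ 2 * η * K := by
  have hmin := hp w
  rw [dist_self] at hmin
  have hdrop : f w - f p ≤ K * dist w p :=
    (le_abs_self _).trans (by simpa [Real.dist_eq] using hf.dist_le_mul w p)
  have hsq : dist w p * dist w p ≤ 2 * η * K * dist w p := by
    have h2η : 2 * η * (1 / (2 * η)) = 1 := by field_simp
    nlinarith [mul_le_mul_of_nonneg_left hmin (by positivity : (0 : ℝ) ≤ 2 * η)]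
  rcases (dist_nonneg : 0 ≤ dist w p).eq_or_lt with h0 | hpos
  · rw [← h0]; positivity
  · exact le_of_mul_le_mul_right hsq hpos

theorem variational_inequality {H : Type*} [MetricSpace H] (G : Hadamard H) {f : H → ℝ}
    (hf : GeoConvexReal G f) {η : ℝ} (hη : 0 < η) {w p : H} (hp : IsProxPoint f η w p) (z : H) :
    2 * η * (f p - f z) + dist w p ^ 2 + dist p z ^ 2 ≤ dist w z ^ 2 := by
  set c := 1 / (2 * η) with hc_def
  have hc : 0 < c := by positivity
  suffices key : f p + c * dist w p ^ 2 + c * dist p z ^ 2 ≤ f z + c * dist w z ^ 2 by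
    have h2ηc : 2 * η * c = 1 := by rw [hc_def]; field_simp
    nlinarith [mul_le_mul_of_nonneg_left key (by positivity : (0 : ℝ) ≤ 2 * η)]
  have hshift : ∀ t ∈ Set.Ioc (0 : ℝ) 1, f p + c * dist w p ^ 2 + c * dist p z ^ 2
      ≤ f z + c * dist w z ^ 2 + t * (c * dist p z ^ 2) := by
    -- minimality of `p` against `geo p z t`, convexity of `f` and CAT(0), divided by `t`
    rintro t ⟨ht0, ht1⟩
    have ht : t ∈ Set.Icc (0 : ℝ) 1 := ⟨ht0.le, ht1⟩
    have hmin := hp (G.geo p z t)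
    have hconv := hf p z t ht
    have hcat := G.cat0 w p z t ht
    refine le_of_mul_le_mul_left ?_ ht0
    nlinarith [mul_le_mul_of_nonneg_left hcat hc.le]
  have hlim : Tendsto (fun t => f z + c * dist w z ^ 2 + t * (c * dist p z ^ 2)) (𝓝[>] 0)
      (𝓝 (f z + c * dist w z ^ 2)) := by
    have hcont : Continuous fun t : ℝ => f z + c * dist w z ^ 2 + t * (c * dist p z ^ 2) := by
      fun_prop
    simpa using (hcont.tendsto 0).mono_left nhdsWithin_le_nhds
  exact ge_of_tendsto hlim (eventually_of_mem (Ioc_mem_nhdsGT one_pos) hshift)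

end IsProxPoint

theorem dist_le_of_isProxPoint_chain {X : Type*} [PseudoMetricSpace X] {fs : ℕ → X → ℝ}
    {K : ℝ≥0} {η : ℝ} (hη : 0 < η) {N : ℕ} (hlip : ∀ n ∈ Finset.Icc 1 N, LipschitzWith K (fs n))
    {y : ℕ → X} (hy : ∀ n ∈ Finset.Icc 1 N, IsProxPoint (fs n) η (y (n - 1)) (y n)) :
    dist (y 0) (y N) ≤ N * (2 * η * K) := by
  induction N with
  | zero => simp
  | succ N ih =>
    have hsub := Finset.Icc_subset_Icc_right (a := 1) N.le_succ
    have hmem : N + 1 ∈ Finset.Icc 1 (N + 1) := Finset.mem_Icc.2 ⟨N.succ_pos, le_rfl⟩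
    calc dist (y 0) (y (N + 1)) ≤ dist (y 0) (y N) + dist (y N) (y (N + 1)) := dist_triangle _ _ _
      _ ≤ N * (2 * η * K) + 2 * η * K :=
        add_le_add (ih (fun n hn => hlip n (hsub hn)) (fun n hn => hy n (hsub hn)))
          ((hy _ hmem).dist_le hη (hlip _ hmem))
      _ = (N + 1 : ℕ) * (2 * η * K) := by push_cast; ring

theorem Hadamard.dist_sq_add_le_of_isProxPoint_cycle {H : Type*} [MetricSpace H]
    (G : Hadamard H) {fs : ℕ → H → ℝ} {K : ℝ≥0} {η : ℝ} (hη : 0 < η) {N : ℕ}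
    (hconv : ∀ n ∈ Finset.Icc 1 N, GeoConvexReal G (fs n))
    (hlip : ∀ n ∈ Finset.Icc 1 N, LipschitzWith K (fs n))
    {y : ℕ → H} (hy : ∀ n ∈ Finset.Icc 1 N, IsProxPoint (fs n) η (y (n - 1)) (y n)) (z : H) :
    dist (y N) z ^ 2 + 2 * η * ∑ n ∈ Finset.Icc 1 N, (fs n (y 0) - fs n z)
      ≤ dist (y 0) z ^ 2 + 4 * K ^ 2 * N ^ 2 * η ^ 2 := by
  induction N with
  | zero => simp
  | succ N ih =>
    have hsub := Finset.Icc_subset_Icc_right (a := 1) N.le_succ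
    have hmem : N + 1 ∈ Finset.Icc 1 (N + 1) := Finset.mem_Icc.2 ⟨N.succ_pos, le_rfl⟩
    have hprev := ih (fun n hn => hconv n (hsub hn)) (fun n hn => hlip n (hsub hn))
      (fun n hn => hy n (hsub hn))
    have hstep := (hy _ hmem).variational_inequality G (hconv _ hmem) hη z
    have hdrift : fs (N + 1) (y 0) - fs (N + 1) (y (N + 1)) ≤ K * ((N + 1 : ℕ) * (2 * η * K)) :=
      calc fs (N + 1) (y 0) - fs (N + 1) (y (N + 1))
          ≤ dist (fs (N + 1) (y 0)) (fs (N + 1) (y (N + 1))) := le_abs_self _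
        _ ≤ K * dist (y 0) (y (N + 1)) := (hlip _ hmem).dist_le_mul _ _
        _ ≤ K * ((N + 1 : ℕ) * (2 * η * K)) :=
          mul_le_mul_of_nonneg_left (dist_le_of_isProxPoint_chain hη hlip hy) K.2
    rw [Finset.sum_Icc_succ_top (by omega)]
    simp only [add_tsub_cancel_right] at hstep
    push_cast at hdrift ⊢
    nlinarith [mul_le_mul_of_nonneg_left hdrift (by positivity : (0 : ℝ) ≤ 2 * η),
      sq_nonneg (dist (y N) (y (N + 1))), mul_nonneg (mul_nonneg (sq_nonneg (K : ℝ))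
        (sq_nonneg η)) (Nat.cast_nonneg N : (0 : ℝ) ≤ N)]

theorem add_sum_range_le_of_succ_le {D w e : ℕ → ℝ} (h : ∀ k, D (k + 1) + w k ≤ D k + e k)
    (K : ℕ) : D K + ∑ k ∈ Finset.range K, w k ≤ D 0 + ∑ k ∈ Finset.range K, e k := by
  induction K with
  | zero => simp
  | succ K ih => rw [Finset.sum_range_succ, Finset.sum_range_succ]; linarith [h K]

theorem tendsto_zero_of_succ_le_add_of_subseq {u e : ℕ → ℝ} (hu : ∀ k, 0 ≤ u k)
    (he : ∀ k, 0 ≤ e k) (hsum : Summable e) (hrec : ∀ k, u (k + 1) ≤ u k + e k)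
    {φ : ℕ → ℕ} (hφ : StrictMono φ) (hsub : Tendsto (u ∘ φ) atTop (𝓝 0)) :
    Tendsto u atTop (𝓝 0) := by
  -- `u k + ∑_{i ≥ k} e i` is antitone, so it converges, and along `φ` its limit is `0`.
  set r : ℕ → ℝ := fun k => ∑' i, e (i + k) with hr_def
  have hr0 : Tendsto r atTop (𝓝 0) := tendsto_sum_nat_add e
  have hr : ∀ k, r k = e k + r (k + 1) := fun k => by
    simpa [hr_def, add_assoc, add_comm 1] using ((summable_nat_add_iff k).2 hsum).tsum_eq_zero_add
  have hanti : Antitone (u + r) := antitone_nat_of_succ_le fun k => by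
    simp only [Pi.add_apply]; linarith [hrec k, hr k]
  have hbdd : BddBelow (Set.range (u + r)) :=
    ⟨0, Set.forall_mem_range.2 fun k => add_nonneg (hu k) (tsum_nonneg fun i => he _)⟩
  have hlim := tendsto_atTop_ciInf hanti hbdd
  have hsub' := hsub.add (hr0.comp hφ.tendsto_atTop)
  rw [add_zero] at hsub'
  have hinf : ⨅ k, (u + r) k = 0 := tendsto_nhds_unique (hlim.comp hφ.tendsto_atTop) hsub'
  have hu0 := (hinf ▸ hlim).sub hr0
  simp only [Pi.add_apply, add_sub_cancel_right, sub_zero] at hu0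
  exact hu0

theorem exists_strictMono_tendsto_zero_of_not_summable {t g : ℕ → ℝ} (ht : ∀ k, 0 ≤ t k)
    (hg : ∀ k, 0 ≤ g k) (htg : Summable fun k => t k * g k) (hdiv : ¬Summable t) :
    ∃ φ : ℕ → ℕ, StrictMono φ ∧ Tendsto (g ∘ φ) atTop (𝓝 0) := by
  have hfreq : ∀ n : ℕ, ∃ᶠ k in atTop, g k < 1 / (n + 1) := by
    intro n
    by_contra h
    rw [not_frequently] at h
    refine hdiv (Summable.of_norm_bounded_eventually_nat (htg.mul_left ((n : ℝ) + 1)) ?_)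
    filter_upwards [h] with k hk
    rw [not_lt, div_le_iff₀' (by positivity)] at hk
    rw [Real.norm_of_nonneg (ht k)]
    nlinarith [ht k]
  obtain ⟨φ, hφ, hlt⟩ := extraction_forall_of_frequently hfreq
  exact ⟨φ, hφ, squeeze_zero (fun i => hg _) (fun i => (hlt i).le)
    tendsto_one_div_add_atTop_nhds_zero_nat⟩

section QuasiFejer

variable {X : Type*} [MetricSpace X] [ProperSpace X] {f : X → ℝ} {t e : ℕ → ℝ} {a : ℕ → X}

theorem exists_minimizer_tendsto_subseq_of_dist_sq_succ_le (hf : Continuous f)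
    (hmin : ∃ z, ∀ y, f z ≤ f y) (ht : ∀ k, 0 ≤ t k) (hdiv : ¬Summable t) (he : ∀ k, 0 ≤ e k)
    (hsum : Summable e)
    (hrec : ∀ k z, dist (a (k + 1)) z ^ 2 + t k * (f (a k) - f z) ≤ dist (a k) z ^ 2 + e k) :
    ∃ z, (∀ y, f z ≤ f y) ∧ ∃ φ : ℕ → ℕ, StrictMono φ ∧ Tendsto (a ∘ φ) atTop (𝓝 z) := by
  obtain ⟨z₀, hz₀⟩ := hmin
  have hgap : ∀ k, 0 ≤ f (a k) - f z₀ := fun k => sub_nonneg.2 (hz₀ _)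
  have hw : ∀ k, 0 ≤ t k * (f (a k) - f z₀) := fun k => mul_nonneg (ht k) (hgap k)
  have htel := add_sum_range_le_of_succ_le (D := fun k => dist (a k) z₀ ^ 2)
    (w := fun k => t k * (f (a k) - f z₀)) (hrec · z₀)
  have hpartial : ∀ K, ∑ k ∈ Finset.range K, e k ≤ ∑' k, e k :=
    fun K => hsum.sum_le_tsum _ fun k _ => he k
  have hwsum : Summable fun k => t k * (f (a k) - f z₀) :=
    summable_of_sum_range_le (c := dist (a 0) z₀ ^ 2 + ∑' k, e k) hw fun K => by
      linarith [htel K, hpartial K, sq_nonneg (dist (a K) z₀)]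
  have hball : ∀ k, a k ∈ closedBall z₀ √(dist (a 0) z₀ ^ 2 + ∑' k, e k) := fun k => by
    refine mem_closedBall.2 ((le_abs_self _).trans (Real.abs_le_sqrt ?_))
    linarith [htel k, hpartial k, Finset.sum_nonneg fun i (_ : i ∈ Finset.range k) => hw i]
  obtain ⟨φ, hφ, hgap0⟩ := exists_strictMono_tendsto_zero_of_not_summable ht hgap hwsum hdiv
  obtain ⟨z, -, ψ, hψ, hz⟩ := tendsto_subseq_of_bounded isBounded_closedBall fun i => hball (φ i)
  have hfz : f z = f z₀ := by
    have hlim : Tendsto (fun i => f (a (φ (ψ i))) - f z₀) atTop (𝓝 (f z - f z₀)) :=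
      ((hf.tendsto z).comp hz).sub_const _
    linarith [tendsto_nhds_unique hlim (hgap0.comp hψ.tendsto_atTop)]
  exact ⟨z, fun y => hfz ▸ hz₀ y, φ ∘ ψ, hφ.comp hψ, hz⟩

theorem exists_minimizer_tendsto_of_dist_sq_succ_le (hf : Continuous f)
    (hmin : ∃ z, ∀ y, f z ≤ f y) (ht : ∀ k, 0 ≤ t k) (hdiv : ¬Summable t) (he : ∀ k, 0 ≤ e k)
    (hsum : Summable e)
    (hrec : ∀ k z, dist (a (k + 1)) z ^ 2 + t k * (f (a k) - f z) ≤ dist (a k) z ^ 2 + e k) :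
    ∃ z, (∀ y, f z ≤ f y) ∧ Tendsto a atTop (𝓝 z) := by
  obtain ⟨z, hz, φ, hφ, hlim⟩ :=
    exists_minimizer_tendsto_subseq_of_dist_sq_succ_le hf hmin ht hdiv he hsum hrec
  have hfejer : ∀ k, dist (a (k + 1)) z ^ 2 ≤ dist (a k) z ^ 2 + e k := fun k => by
    nlinarith [hrec k z, mul_nonneg (ht k) (sub_nonneg.2 (hz (a k)))]
  have hsub : Tendsto (fun i => dist (a (φ i)) z ^ 2) atTop (𝓝 0) := by
    simpa using (tendsto_iff_dist_tendsto_zero.1 hlim).pow 2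
  have hsq := tendsto_zero_of_succ_le_add_of_subseq (u := fun k => dist (a k) z ^ 2)
    (fun k => sq_nonneg _) he hsum hfejer hφ hsub
  refine ⟨z, hz, tendsto_iff_dist_tendsto_zero.2 ?_⟩
  simpa [Real.sqrt_sq dist_nonneg] using hsq.sqrt

end QuasiFejer

theorem tendsto_of_tendsto_mul_of_dist_le {X : Type*} [PseudoMetricSpace X] {x : ℕ → X} {z : X}
    {N : ℕ} (hN : N ≠ 0) {δ : ℕ → ℝ} (hδ : Tendsto δ atTop (𝓝 0))
    (hx : Tendsto (fun k => x (k * N)) atTop (𝓝 z))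
    (hclose : ∀ k, ∀ n < N, dist (x (k * N)) (x (k * N + n)) ≤ δ k) :
    Tendsto x atTop (𝓝 z) := by
  rw [tendsto_iff_dist_tendsto_zero] at hx ⊢
  have hbound : ∀ j, dist (x j) z ≤ δ (j / N) + dist (x (j / N * N)) z := fun j => by
    have hj := hclose (j / N) (j % N) (Nat.mod_lt j (Nat.pos_of_ne_zero hN))
    rw [Nat.div_add_mod' j N] at hj
    linarith [dist_triangle_left (x j) z (x (j / N * N))]
  have hlim := (hδ.add hx).comp (Nat.tendsto_div_const_atTop hN)
  rw [add_zero] at hlim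
  exact squeeze_zero (fun _ => dist_nonneg) hbound hlim

/-- Cyclic splitting proximal point algorithm for Lipschitz convex components:
the sequence `(x j)` converges to a minimizer of `f = ∑ₙ fₙ`. -/
theorem cyclic_splitting_ppa_lipschitz_converges
    {H : Type*} [MetricSpace H] [CompleteSpace H] [LocallyCompactSpace H]
    (G : Hadamard H)
    (N : ℕ) (hN : 1 ≤ N)
    (fs : ℕ → H → ℝ)
    (hfs_conv : ∀ n ∈ Finset.Icc 1 N, GeoConvexReal G (fs n))
    (L : ℝ) (hL : 0 < L)
    (hfs_lip : ∀ n ∈ Finset.Icc 1 N, ∀ x y : H, |fs n x - fs n y| ≤ L * dist x y)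
    (hmin_ne : ∃ z : H, ∀ y : H,
      (∑ n ∈ Finset.Icc 1 N, fs n z) ≤ ∑ n ∈ Finset.Icc 1 N, fs n y)
    (lam : ℕ → ℝ) (hlam_pos : ∀ k, 0 < lam k)
    (hlam_div : ¬ Summable lam) (hlam_sq : Summable fun k => lam k ^ 2)
    (x : ℕ → H)
    (hstep : ∀ k : ℕ, ∀ n ∈ Finset.Icc 1 N, ∀ z : H,
      fs n (x (k * N + n))
          + 1 / (2 * lam k) * dist (x (k * N + n - 1)) (x (k * N + n)) ^ 2
        ≤ fs n z + 1 / (2 * lam k) * dist (x (k * N + n - 1)) z ^ 2) :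
    ∃ z : H,
      (∀ y : H, (∑ n ∈ Finset.Icc 1 N, fs n z) ≤ ∑ n ∈ Finset.Icc 1 N, fs n y) ∧
        Tendsto x atTop (𝓝 z) := by
  have := G.properSpace
  set K : ℝ≥0 := ⟨L, hL.le⟩
  have hlip : ∀ n ∈ Finset.Icc 1 N, LipschitzWith K (fs n) := fun n hn =>
    .of_dist_le_mul (hfs_lip n hn)
  have hprox : ∀ k, ∀ n ∈ Finset.Icc 1 N,
      IsProxPoint (fs n) (lam k) (x (k * N + (n - 1))) (x (k * N + n)) := fun k n hn => by
    rw [← Nat.add_sub_assoc (Finset.mem_Icc.1 hn).1]; exact hstep k n hn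
  have hcycle : ∀ k z, dist (x ((k + 1) * N)) z ^ 2
      + 2 * lam k * ((∑ n ∈ Finset.Icc 1 N, fs n (x (k * N))) - ∑ n ∈ Finset.Icc 1 N, fs n z)
      ≤ dist (x (k * N)) z ^ 2 + 4 * K ^ 2 * N ^ 2 * lam k ^ 2 := fun k z => by
    rw [add_one_mul, ← Finset.sum_sub_distrib]
    exact G.dist_sq_add_le_of_isProxPoint_cycle (hlam_pos k) hfs_conv hlip (hprox k) z
  obtain ⟨z, hz, hanchor⟩ := exists_minimizer_tendsto_of_dist_sq_succ_le
    (a := fun k => x (k * N)) (t := fun k => 2 * lam k)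
    (e := fun k => 4 * K ^ 2 * N ^ 2 * lam k ^ 2)
    (continuous_finsetSum _ fun n hn => (hlip n hn).continuous) hmin_ne
    (fun k => by linarith [hlam_pos k]) (by rwa [summable_mul_left_iff two_ne_zero])
    (fun k => by positivity) (hlam_sq.mul_left _) hcycle
  have hlam0 : Tendsto lam atTop (𝓝 0) := by
    simpa [Real.sqrt_sq (hlam_pos _).le] using hlam_sq.tendsto_atTop_zero.sqrt
  refine ⟨z, hz, tendsto_of_tendsto_mul_of_dist_le (by omega)
    (δ := fun k => N * (2 * lam k * K)) ?_ hanchor fun k n hn => ?_⟩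
  · simpa using ((hlam0.const_mul 2).mul_const (K : ℝ)).const_mul (N : ℝ)
  · have hsub := Finset.Icc_subset_Icc_right (a := 1) hn.le
    exact (dist_le_of_isProxPoint_chain (hlam_pos k) (y := fun m => x (k * N + m))
      (fun m hm => hlip m (hsub hm)) (fun m hm => hprox k m (hsub hm))).trans
      (mul_le_mul_of_nonneg_right (Nat.cast_le.2 hn.le) (by positivity [(hlam_pos k).le]))
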